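/- arXiv:math/0403400 — 2 statements merged into one kernel-verified Lean document; each statement's English description precedes it below -/
import Mathlib

section
/- The set of non-crossing partitions of a finite subset x of ℂ, ordered by refinement, is a lattice, with meet operation inherited from the lattice of all set partitions of x. -/
open Set

noncomputable section
open scoped Classical

/-- `u` is a set-theoretical partition of the set `x ⊆ ℂ`. -/
def IsPartitionOf (x : Set ℂ) (u : Set (Set ℂ)) : Prop :=
  (∀ a ∈ u, a.Nonempty ∧ a ⊆ x) ∧ ∀ z ∈ x, ∃! a, a ∈ u ∧ z ∈ a

/-- The refinement order on partitions. -/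
def Refines (u v : Set (Set ℂ)) : Prop :=
  ∀ a ∈ u, ∃ b ∈ v, a ⊆ b

/-- A partition is non-crossing if the convex hulls of two parts can only meet
when the parts are equal. -/
def IsNoncrossing (u : Set (Set ℂ)) : Prop :=
  ∀ a ∈ u, ∀ b ∈ u, (convexHull ℝ a ∩ convexHull ℝ b).Nonempty → a = b

/-- The set-theoretical meet of two partitions: parts are the nonempty
intersections of parts. -/
def meetParts (u v : Set (Set ℂ)) : Set (Set ℂ) :=
  {s | s.Nonempty ∧ ∃ a ∈ u, ∃ b ∈ v, s = a ∩ b}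

/-- The set of `n`-th roots of unity. -/
def mu (n : ℕ) : Set ℂ := {z : ℂ | z ^ n = 1}

/-- `ζ_n = exp(2iπ/n)`. -/
def zeta (n : ℕ) : ℂ := Complex.exp (2 * (Real.pi : ℂ) * Complex.I / (n : ℂ))

/-- Multiplication of a partition by a complex constant. -/
def rotate (c : ℂ) (u : Set (Set ℂ)) : Set (Set ℂ) :=
  (fun a => (fun z => c * z) '' a) '' u

/-- Invariance of a partition under multiplication by the group `μ_e`. -/
def MuInvariant (e : ℕ) (u : Set (Set ℂ)) : Prop :=
  ∀ ζ : ℂ, ζ ^ e = 1 → rotate ζ u = u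

/-- `NCP(e,1,n)`: non-crossing partitions of `μ_{en}` fixed by the `μ_e`-action. -/
def NCPmu (e n : ℕ) : Set (Set (Set ℂ)) :=
  {u | IsPartitionOf (mu (e * n)) u ∧ IsNoncrossing u ∧ MuInvariant e u}

/-- A partition is long if `0` lies in the convex hull of one of its parts. -/
def IsLong (u : Set (Set ℂ)) : Prop :=
  ∃ a ∈ u, (0 : ℂ) ∈ convexHull ℝ a

/-- The partition `u^♭` obtained by forgetting `0`. -/
def flatNCP (u : Set (Set ℂ)) : Set (Set ℂ) :=
  {s | s.Nonempty ∧ ∃ a ∈ u, s = a \ {0}}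

/-- `NCP(e,e,n+1)`: non-crossing partitions of `μ_{en} ∪ {0}` such that the
partition obtained by forgetting `0` is `μ_e`-invariant. -/
def NCPee (e n : ℕ) : Set (Set (Set ℂ)) :=
  {u | IsPartitionOf (insert 0 (mu (e * n))) u ∧ IsNoncrossing u ∧
    MuInvariant e (flatNCP u)}

/-- The trivial (one-block) partition of `μ_{en} ∪ {0}`. -/
def trivEE (e n : ℕ) : Set (Set ℂ) := {insert 0 (mu (e * n))}

/-- The discrete partition of `μ_n`. -/
def discMu (n : ℕ) : Set (Set ℂ) := {s | ∃ z ∈ mu n, s = {z}}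

/-- `z'` is the counterclockwise successor of `z` on the boundary of the convex
set `b` (all remaining points of `b` are strictly on the left of the directed
line from `z` to `z'`). -/
def ccwSucc (b : Set ℂ) (z z' : ℂ) : Prop :=
  z ∈ b ∧ z' ∈ b ∧ z ≠ z' ∧
    ∀ w ∈ b, w ≠ z → w ≠ z' →
      0 < ((z' - z).re * (w - z).im - (z' - z).im * (w - z).re)

/-- `σ` is the permutation associated with a partition `u` (of a set in convex
position), sending each element of a part to its counterclockwise successor in
that part. -/
def IsSuccMapOn (u : Set (Set ℂ)) (σ : ℂ → ℂ) : Prop :=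
  ∀ b ∈ u, ∀ z ∈ b, (b = {z} → σ z = z) ∧ (b ≠ {z} → ccwSucc b z (σ z))

/-- Restriction of a partition to the subset `X`. -/
def resTo (X : Set ℂ) (u : Set (Set ℂ)) : Set (Set ℂ) :=
  {s | s.Nonempty ∧ ∃ a ∈ u, s = a ∩ X}

/-- `w` is the (classical) Kreweras complement of `u` in `v`, for partitions of
a subset `X ⊆ ℂ` in convex position: it is characterized by
`σ_u σ_w = σ_v` (composition of motions). -/
def KrewRel (X : Set ℂ) (u v w : Set (Set ℂ)) : Prop :=
  Refines u v ∧ Refines w v ∧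
    ∃ σu σv σw : ℂ → ℂ, IsSuccMapOn u σu ∧ IsSuccMapOn v σv ∧ IsSuccMapOn w σw ∧
      ∀ z ∈ X, σw (σu z) = σv z

/-- An element of `NCP(e,e,n+1)` is symmetric if `{0}` is a part (short
symmetric) or its flat is long (long symmetric); otherwise it is asymmetric. -/
def SymmPart (u : Set (Set ℂ)) : Prop :=
  ({0} : Set ℂ) ∈ u ∨ IsLong (flatNCP u)

/-- The map `* : NCP(e,1,n) → NCP(e,e,n+1)`: add `{0}` as a singleton part if
`u` is short, add `0` to the long part if `u` is long. -/
def starNCP (u : Set (Set ℂ)) : Set (Set ℂ) :=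
  if IsLong u then
    {s | ∃ a ∈ u, s = if (0 : ℂ) ∈ convexHull ℝ a then insert 0 a else a}
  else insert {(0 : ℂ)} u

/-- The part of `v` containing `0`. -/
def asymPart (v : Set (Set ℂ)) : Set ℂ := ⋃₀ {a ∈ v | (0 : ℂ) ∈ a}

/-- The union `ã` of the `μ_e`-orbit of the part of `v` containing `0`
(with `0` removed). -/
def tildePart (e : ℕ) (v : Set (Set ℂ)) : Set ℂ :=
  ⋃ ζ ∈ {z : ℂ | z ^ e = 1}, (fun z => ζ * z) '' (asymPart v \ {0})

/-- The map `♯ : NCP(e,e,n+1) → NCP(e,1,n)`. -/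
def sharpNCP (e : ℕ) (v : Set (Set ℂ)) : Set (Set ℂ) :=
  if SymmPart v then flatNCP v
  else insert (tildePart e v) {b ∈ flatNCP v | ¬ b ⊆ tildePart e v}

/-- The minimal asymmetric partition `m_ζ`, with only non-singleton part `{0, ζ}`. -/
def mzeta (e n : ℕ) (ζ : ℂ) : Set (Set ℂ) :=
  insert {0, ζ} {s | ∃ z ∈ mu (e * n), z ≠ ζ ∧ s = {z}}

/-- The set `a_ζ = {0, ζ_{en}ζ, ζ_{en}²ζ, …, ζ_{en}ⁿζ}`. -/
def azeta (e n : ℕ) (ζ : ℂ) : Set ℂ :=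
  insert 0 {z : ℂ | ∃ k : ℕ, 1 ≤ k ∧ k ≤ n ∧ z = zeta (e * n) ^ k * ζ}

/-- The maximal asymmetric partition `M_ζ`, with asymmetric part `a_ζ` and
remaining parts `ζ' a_ζ ∖ {0}` for `ζ' ∈ μ_e ∖ {1}`. -/
def Mzeta (e n : ℕ) (ζ : ℂ) : Set (Set ℂ) :=
  insert (azeta e n ζ)
    {s | ∃ ζ' : ℂ, ζ' ^ e = 1 ∧ ζ' ≠ 1 ∧ s = (fun z => ζ' * z) '' (azeta e n ζ \ {0})}

/-- `w` is the complement `u\v` of `u` in `v`, in `NCP(e,e,n+1)`, following the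
three cases of the definition: (A) both symmetric, computed through the flats
in `NCP(e,1,n)`; (B) `v` asymmetric, computed in some interval `[disc, M_ζ]`
through restriction to `a_ζ`; (C) `u` asymmetric, computed through the
isomorphisms `ψ_ζ` and `φ_ζ` with the non-crossing partitions of `a_ζ`. -/
def IsComplEE (e n : ℕ) (u v w : Set (Set ℂ)) : Prop :=
  Refines u v ∧
    ((SymmPart u ∧ SymmPart v ∧
        ∃ k, KrewRel (mu (e * n)) (flatNCP u) (flatNCP v) k ∧ w = starNCP k) ∨
     (¬ SymmPart v ∧ ∃ ζ : ℂ, ζ ^ (e * n) = 1 ∧ Refines v (Mzeta e n ζ) ∧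
        Refines w (Mzeta e n ζ) ∧
        KrewRel (azeta e n ζ) (resTo (azeta e n ζ) u) (resTo (azeta e n ζ) v)
          (resTo (azeta e n ζ) w)) ∨
     (¬ SymmPart u ∧ ∃ ζ : ℂ, ζ ^ (e * n) = 1 ∧ Refines (mzeta e n ζ) u ∧
        Refines w (Mzeta e n ζ) ∧
        KrewRel (azeta e n ζ) (resTo (azeta e n ζ) u) (resTo (azeta e n ζ) v)
          (resTo (azeta e n ζ) w)))

/-- Height of an element of `NCP(e,e,n+1)` with `m` parts: `n - (m-1)/e` in the
short symmetric case, `n+1 - (m-1)/e` in the long symmetric case,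
`n+1 - m/e` in the asymmetric case. -/
def htEE (e n : ℕ) (u : Set (Set ℂ)) : ℤ :=
  if ({0} : Set ℂ) ∈ u then (n : ℤ) - ((u.ncard : ℤ) - 1) / (e : ℤ)
  else if IsLong (flatNCP u) then (n : ℤ) + 1 - ((u.ncard : ℤ) - 1) / (e : ℤ)
  else (n : ℤ) + 1 - (u.ncard : ℤ) / (e : ℤ)

/-- The height-one symmetric partition `u_{p,q}`, with non-singleton parts the
`e` rotates `ζ_e^i {ζ_{ne}^p, ζ_{ne}^q}`. -/
def upq (e n : ℕ) (p q : ℤ) : Set (Set ℂ) :=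
  {s | ∃ ζ : ℂ, ζ ^ e = 1 ∧ s = {ζ * zeta (e * n) ^ p, ζ * zeta (e * n) ^ q}} ∪
    {s | ∃ z ∈ insert (0 : ℂ) (mu (e * n)), s = {z} ∧
      ∀ ζ : ℂ, ζ ^ e = 1 → z ≠ ζ * zeta (e * n) ^ p ∧ z ≠ ζ * zeta (e * n) ^ q}

/-- The height-one asymmetric partition `u_p`, with unique non-singleton part
`{0, ζ_{en}^p}`. -/
def upt (e n : ℕ) (p : ℤ) : Set (Set ℂ) :=
  insert {0, zeta (e * n) ^ p}
    {s | ∃ z ∈ mu (e * n), z ≠ zeta (e * n) ^ p ∧ s = {z}}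

/-- A weakly increasing chain of length `N` in a set `S` of partitions. -/
def IsChainOf (S : Set (Set (Set ℂ))) (N : ℕ) (c : Fin N → Set (Set ℂ)) : Prop :=
  (∀ i, c i ∈ S) ∧ ∀ i j : Fin N, i ≤ j → Refines (c i) (c j)

/-!
The meet is taken part by part: a part `a ∩ b` of `meetParts u v` has its convex hull inside
those of `a` and `b`, so two crossing parts of the meet come from crossing parts of `u` and
of `v`. The join of `u` and `v` is then the least element of the family of non-crossing
partitions coarser than both: this family is finite, contains the one-block partition and
is closed under meets, so a minimal member refines its meet with any other member.
-/

theorem refines_iff_lowerClosure_le {u v : Set (Set ℂ)} :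
    Refines u v ↔ lowerClosure u ≤ lowerClosure v := by
  simp only [Refines, lowerClosure_le, subset_def, SetLike.mem_coe, mem_lowerClosure]

theorem Refines.trans {u v w : Set (Set ℂ)} (huv : Refines u v) (hvw : Refines v w) :
    Refines u w :=
  refines_iff_lowerClosure_le.2 <|
    (refines_iff_lowerClosure_le.1 huv).trans (refines_iff_lowerClosure_le.1 hvw)

theorem meetParts_refines_left (u v : Set (Set ℂ)) : Refines (meetParts u v) u := by
  rintro _ ⟨-, a, ha, b, -, rfl⟩
  exact ⟨a, ha, inter_subset_left⟩

theorem meetParts_refines_right (u v : Set (Set ℂ)) : Refines (meetParts u v) v := by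
  rintro _ ⟨-, a, -, b, hb, rfl⟩
  exact ⟨b, hb, inter_subset_right⟩

theorem refines_meetParts {w u v : Set (Set ℂ)} (hw : ∀ c ∈ w, c.Nonempty)
    (hwu : Refines w u) (hwv : Refines w v) : Refines w (meetParts u v) := by
  intro c hc
  obtain ⟨a, ha, hca⟩ := hwu c hc
  obtain ⟨b, hb, hcb⟩ := hwv c hc
  exact ⟨a ∩ b, ⟨(hw c hc).mono (subset_inter hca hcb), a, ha, b, hb, rfl⟩,
    subset_inter hca hcb⟩

theorem IsPartitionOf.meetParts {x : Set ℂ} {u v : Set (Set ℂ)}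
    (hu : IsPartitionOf x u) (hv : IsPartitionOf x v) :
    IsPartitionOf x (meetParts u v) := by
  refine ⟨?_, fun z hz => ?_⟩
  · rintro _ ⟨hs, a, ha, b, -, rfl⟩
    exact ⟨hs, inter_subset_left.trans (hu.1 a ha).2⟩
  · obtain ⟨a, ⟨ha, hza⟩, ha_unique⟩ := hu.2 z hz
    obtain ⟨b, ⟨hb, hzb⟩, hb_unique⟩ := hv.2 z hz
    refine ⟨a ∩ b, ⟨⟨⟨z, hza, hzb⟩, a, ha, b, hb, rfl⟩, hza, hzb⟩, ?_⟩
    rintro _ ⟨⟨-, a', ha', b', hb', rfl⟩, hza', hzb'⟩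
    rw [ha_unique a' ⟨ha', hza'⟩, hb_unique b' ⟨hb', hzb'⟩]

theorem IsNoncrossing.meetParts {u v : Set (Set ℂ)}
    (hu : IsNoncrossing u) (hv : IsNoncrossing v) : IsNoncrossing (meetParts u v) := by
  rintro _ ⟨-, a, ha, b, hb, rfl⟩ _ ⟨-, a', ha', b', hb', rfl⟩ ⟨z, hz, hz'⟩
  rw [hu a ha a' ha' ⟨z, convexHull_mono inter_subset_left hz,
      convexHull_mono inter_subset_left hz'⟩,
    hv b hb b' hb' ⟨z, convexHull_mono inter_subset_right hz,
      convexHull_mono inter_subset_right hz'⟩]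

theorem finite_setOf_isPartitionOf {x : Set ℂ} (hx : x.Finite) :
    {u | IsPartitionOf x u}.Finite :=
  hx.finite_subsets.finite_subsets.subset fun _ hu _ ha => (hu.1 _ ha).2

theorem exists_coarsest_noncrossing_partition (x : Set ℂ) :
    ∃ t, IsPartitionOf x t ∧ IsNoncrossing t ∧ ∀ u, IsPartitionOf x u → Refines u t := by
  refine ⟨{a | a = x ∧ x.Nonempty}, ⟨?_, fun z hz => ?_⟩, ?_, fun u hu a ha => ?_⟩
  · rintro _ ⟨rfl, hx⟩
    exact ⟨hx, Subset.rfl⟩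
  · exact ⟨x, ⟨⟨rfl, z, hz⟩, hz⟩, fun _ h => h.1.1⟩
  · rintro _ ⟨rfl, -⟩ _ ⟨rfl, -⟩ -
    rfl
  · exact ⟨x, ⟨rfl, (hu.1 a ha).1.mono (hu.1 a ha).2⟩, (hu.1 a ha).2⟩

theorem exists_forall_refines_of_meetParts_mem {S : Set (Set (Set ℂ))} (hS : S.Finite)
    (hne : S.Nonempty) (hmeet : ∀ w ∈ S, ∀ w' ∈ S, meetParts w w' ∈ S) :
    ∃ j ∈ S, ∀ w ∈ S, Refines j w := by
  -- `Refines` is only a preorder; minimize the lower closure of the parts instead.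
  obtain ⟨j, hjS, hjmin⟩ := hS.exists_minimalFor (fun w => lowerClosure w) S hne
  refine ⟨j, hjS, fun w hw => ?_⟩
  have hj : Refines j (meetParts j w) :=
    refines_iff_lowerClosure_le.2 <| hjmin (hmeet j hjS w hw) <|
      refines_iff_lowerClosure_le.1 (meetParts_refines_left j w)
  exact hj.trans (meetParts_refines_right j w)

/-- The set of non-crossing partitions of a finite subset `x ⊆ ℂ`, ordered by
refinement, is a lattice, with meet inherited from the lattice of all set
partitions of `x`. -/
theorem stmt1 (x : Set ℂ) (hx : x.Finite) (u v : Set (Set ℂ))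
    (hu : IsPartitionOf x u) (hu' : IsNoncrossing u)
    (hv : IsPartitionOf x v) (hv' : IsNoncrossing v) :
    (IsPartitionOf x (meetParts u v) ∧ IsNoncrossing (meetParts u v) ∧
      Refines (meetParts u v) u ∧ Refines (meetParts u v) v ∧
      ∀ w, IsPartitionOf x w → IsNoncrossing w → Refines w u → Refines w v →
        Refines w (meetParts u v)) ∧
    (∃ j, IsPartitionOf x j ∧ IsNoncrossing j ∧ Refines u j ∧ Refines v j ∧
      ∀ w, IsPartitionOf x w → IsNoncrossing w → Refines u w → Refines v w →
        Refines j w) := by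
  refine ⟨⟨hu.meetParts hv, hu'.meetParts hv', meetParts_refines_left u v,
    meetParts_refines_right u v, fun w hw _ => refines_meetParts fun c hc => (hw.1 c hc).1⟩, ?_⟩
  set S := {w | IsPartitionOf x w ∧ IsNoncrossing w ∧ Refines u w ∧ Refines v w}
  have hS : S.Finite := (finite_setOf_isPartitionOf hx).subset fun _ hw => hw.1
  have hne : S.Nonempty := by
    obtain ⟨t, ht, ht', ht_top⟩ := exists_coarsest_noncrossing_partition x
    exact ⟨t, ht, ht', ht_top u hu, ht_top v hv⟩
  have hmeet : ∀ w ∈ S, ∀ w' ∈ S, meetParts w w' ∈ S := by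
    rintro w ⟨hw, hw', huw, hvw⟩ w' ⟨hw₁, hw₁', huw₁, hvw₁⟩
    exact ⟨hw.meetParts hw₁, hw'.meetParts hw₁',
      refines_meetParts (fun c hc => (hu.1 c hc).1) huw huw₁,
      refines_meetParts (fun c hc => (hv.1 c hc).1) hvw hvw₁⟩
  obtain ⟨j, ⟨hj, hj', huj, hvj⟩, hj_least⟩ := exists_forall_refines_of_meetParts_mem hS hne hmeet
  exact ⟨j, hj, hj', huj, hvj, fun w hw hw' huw hvw => hj_least w ⟨hw, hw', huw, hvw⟩⟩
end
end

section
/- Every element of NCP(e,e,n+1) is of exactly one of three types: short symmetric (u^♭ is short and {0} is a part of u), long symmetric (u^♭ is long, and then the long part of u^♭ together with 0 forms a part of u), or asymmetric (u^♭ is short and {0} is not a part of u, in which case 0 lies in a unique part a ∪ {0} with a a part of u^♭). -/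
open Set

noncomputable section
open scoped Classical

/-- Every element of `NCP(e,e,n+1)` is of exactly one of three types:
short symmetric (`u^♭` short and `{0}` a part of `u`); long symmetric
(`u^♭` long, and then the long part of `u^♭` together with `0` is a part of
`u`); asymmetric (`u^♭` short, `{0}` not a part, and then `0` lies in a unique
part `a ∪ {0}` with `a` a part of `u^♭`). -/
theorem stmt11 (e n : ℕ) (he : 0 < e) (hn : 0 < n) (u : Set (Set ℂ))
    (hu : u ∈ NCPee e n) :
    ((¬ IsLong (flatNCP u) ∧ ({0} : Set ℂ) ∈ u) ∨
     (IsLong (flatNCP u) ∧ ({0} : Set ℂ) ∉ u ∧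
        ∃ a ∈ flatNCP u, (0 : ℂ) ∈ convexHull ℝ a ∧ insert (0 : ℂ) a ∈ u) ∨
     (¬ IsLong (flatNCP u) ∧ ({0} : Set ℂ) ∉ u ∧
        ∃! a, a ∈ flatNCP u ∧ insert (0 : ℂ) a ∈ u)) ∧
    ¬ (IsLong (flatNCP u) ∧ ({0} : Set ℂ) ∈ u) := by
  obtain ⟨⟨hparts, huniq⟩, hnc, hinv⟩ := hu
  obtain ⟨b, ⟨hbu, h0b⟩, hbun⟩ := huniq 0 (mem_insert _ _)
  -- if {0} is a part, the flat is short
  have key : ({0} : Set ℂ) ∈ u → ¬ IsLong (flatNCP u) := by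
    rintro h0 ⟨a, ⟨hane, c, hcu, hac⟩, h0a⟩
    have hc0 : c = {0} := by
      apply hnc c hcu {0} h0
      refine ⟨0, ?_, subset_convexHull ℝ _ rfl⟩
      exact convexHull_mono (hac ▸ diff_subset) h0a
    rw [hac, hc0] at hane
    simp at hane
  by_cases h0u : ({0} : Set ℂ) ∈ u
  · exact ⟨Or.inl ⟨key h0u, h0u⟩, fun h => key h.2 h.1⟩
  · refine ⟨?_, fun h => h0u h.2⟩
    have hbne : b ≠ {0} := fun h => h0u (h ▸ hbu)
    have h0c : ∀ c ∈ u, (0:ℂ) ∈ c → c = b := fun c hc h0 => hbun c ⟨hc, h0⟩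
    by_cases hl : IsLong (flatNCP u)
    · refine Or.inr (Or.inl ⟨hl, h0u, ?_⟩)
      obtain ⟨a, ⟨hane, c, hcu, hac⟩, h0a⟩ := hl
      have h0c' : (0:ℂ) ∈ convexHull ℝ c :=
        convexHull_mono (hac ▸ diff_subset) h0a
      have hcb : c = b :=
        hnc c hcu b hbu ⟨0, h0c', subset_convexHull ℝ _ h0b⟩
      have h0inc : (0:ℂ) ∈ c := hcb ▸ h0b
      refine ⟨a, ⟨hane, c, hcu, hac⟩, h0a, ?_⟩
      have : insert (0:ℂ) a = c := by
        rw [hac, Set.insert_diff_singleton, Set.insert_eq_self.mpr h0inc]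
      rw [this]; exact hcu
    · refine Or.inr (Or.inr ⟨hl, h0u, ?_⟩)
      have hane : (b \ {0}).Nonempty := by
        rcases Set.eq_empty_or_nonempty (b \ {0}) with h | h
        · exact absurd (Set.Subset.antisymm (Set.diff_eq_empty.mp h)
            (Set.singleton_subset_iff.mpr h0b)) hbne
        · exact h
      have hins : insert (0:ℂ) (b \ {0}) = b := by
        rw [Set.insert_diff_singleton, Set.insert_eq_self.mpr h0b]
      refine ⟨b \ {0}, ⟨⟨hane, b, hbu, rfl⟩, hins.symm ▸ hbu⟩, ?_⟩
      rintro a ⟨⟨hane', c, hcu, hac⟩, hau⟩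
      have h0na : (0:ℂ) ∉ a := hac ▸ fun h => h.2 rfl
      have : insert (0:ℂ) a = b :=
        h0c _ hau (mem_insert _ _)
      rw [← this, Set.insert_diff_self_of_notMem h0na]
end
end
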